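/- arXiv:1508.00556 — 3 statements merged into one kernel-verified Lean document; each statement's English description precedes it below -/
import Mathlib

section
/- Let E be a complex vector space and A, Π linear operators with A² = Id and Π² = Id. If u is an eigenvector of A − αΠ with eigenvalue λ and (AΠ − ΠA)u ≠ 0, then (AΠ − ΠA)u is an eigenvector of A − αΠ with eigenvalue −λ. -/
theorem stmt_8 (E : Type*) [AddCommGroup E] [Module ℂ E]
    (A Pi : E →ₗ[ℂ] E) (hA : A ∘ₗ A = LinearMap.id) (hPi : Pi ∘ₗ Pi = LinearMap.id)
    (α lam : ℂ) (u : E) (hu : u ≠ 0)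
    (heig : A u - α • Pi u = lam • u)
    (hv : A (Pi u) - Pi (A u) ≠ 0) :
    A (A (Pi u) - Pi (A u)) - α • Pi (A (Pi u) - Pi (A u))
      = (-lam) • (A (Pi u) - Pi (A u)) := by
  have hA' : ∀ x, A (A x) = x := fun x => congrFun (congrArg DFunLike.coe hA) x
  have hPi' : ∀ x, Pi (Pi x) = x := fun x => congrFun (congrArg DFunLike.coe hPi) x
  have h1 : A u = lam • u + α • Pi u := by rw [← heig]; abel
  have h3 : A (Pi (A u)) = lam • A (Pi u) + α • A u := by
    have h2 : Pi (A u) = lam • Pi u + α • u := by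
      rw [h1, map_add, map_smul, map_smul, hPi']
    rw [h2, map_add, map_smul, map_smul]
  have h5 : α • Pi (A (Pi u)) = Pi u - lam • Pi (A u) := by
    have h4 : u = lam • A u + α • A (Pi u) := by
      conv_lhs => rw [← hA' u, h1]
      rw [map_add, map_smul, map_smul]
    have := congrArg Pi h4
    rw [map_add, map_smul, map_smul] at this
    rw [eq_sub_iff_add_eq, add_comm]
    exact this.symm
  rw [map_sub, map_sub, hA', hPi', h3, smul_sub, h5]
  module
end

section
/- Let E be a complex Banach space and A, Π bounded operators with A² = Id, Π² = Id and ΠA + AΠ nilpotent. Then for α, β ∈ ℂ, the operator A + αΠ + β·Id is invertible whenever β² − α² ≠ 1. -/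
set_option maxHeartbeats 1000000 in

theorem stmt_10 (E : Type*) [NormedAddCommGroup E] [NormedSpace ℂ E] [CompleteSpace E]
    (A Pi : E →L[ℂ] E) (hA : A * A = 1) (hPi : Pi * Pi = 1)
    (hnil : IsNilpotent (Pi * A + A * Pi)) (α β : ℂ) (hβ : β ^ 2 - α ^ 2 ≠ 1) :
    IsUnit (A + α • Pi + β • (1 : E →L[ℂ] E)) := by
  set B := A + α • Pi with hB
  set N := Pi * A + A * Pi with hN
  have hB2 : B * B = (1 + α ^ 2) • (1 : E →L[ℂ] E) + α • N := by
    simp only [hB, hN, add_mul, mul_add, smul_mul_assoc, mul_smul_comm, hA, hPi]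
    module
  have key : (B + β • 1) * (B - β • 1) = (1 + α ^ 2 - β ^ 2) • (1 : E →L[ℂ] E) + α • N := by
    have h : (B + β • 1) * (B - β • 1) = B * B - (β ^ 2) • 1 := by
      simp only [add_mul, mul_sub, smul_mul_assoc, mul_smul_comm, one_mul, mul_one]
      module
    rw [h, hB2]; module
  have key' : (B - β • 1) * (B + β • 1) = (1 + α ^ 2 - β ^ 2) • (1 : E →L[ℂ] E) + α • N := by
    have h : (B - β • 1) * (B + β • 1) = B * B - (β ^ 2) • 1 := by
      simp only [add_mul, sub_mul, mul_add, smul_mul_assoc, mul_smul_comm, one_mul, mul_one]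
      module
    rw [h, hB2]; module
  have hc : (1 + α ^ 2 - β ^ 2 : ℂ) ≠ 0 := by
    intro h; apply hβ; linear_combination -h
  have hU : IsUnit ((1 + α ^ 2 - β ^ 2) • (1 : E →L[ℂ] E) + α • N) := by
    have h1 : IsUnit ((1 + α ^ 2 - β ^ 2) • (1 : E →L[ℂ] E)) := by
      rw [isUnit_iff_exists]
      exact ⟨(1 + α ^ 2 - β ^ 2)⁻¹ • 1, by simp [smul_smul, hc], by simp [smul_smul, hc]⟩
    have h2 : IsNilpotent (α • N) := hnil.smul α
    have h3 : Commute (α • N) ((1 + α ^ 2 - β ^ 2) • (1 : E →L[ℂ] E)) := by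
      unfold Commute SemiconjBy
      simp only [smul_mul_assoc, mul_smul_comm, one_mul, mul_one]
      rw [smul_comm]
    exact h2.isUnit_add_left_of_commute h1 h3
  clear_value B N
  obtain ⟨u, hu⟩ := hU
  have hr : (B + β • 1) * ((B - β • 1) * ↑u⁻¹) = 1 := by
    rw [← mul_assoc, key, ← hu, Units.mul_inv]
  have hl : (↑u⁻¹ * (B - β • 1)) * (B + β • 1) = 1 := by
    rw [mul_assoc, key', ← hu, Units.inv_mul]
  have heq : (↑u⁻¹ * (B - β • 1)) = ((B - β • 1) * ↑u⁻¹) :=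
    left_inv_eq_right_inv hl hr
  have hl' : ((B - β • 1) * ↑u⁻¹) * (B + β • 1) = 1 := by rw [← heq]; exact hl
  exact ⟨⟨B + β • 1, (B - β • 1) * ↑u⁻¹, hr, hl'⟩, rfl⟩
end

section
/- Let E be a complex Banach space and suppose L = (1−α)(A − Id) + α(A − Π) where A, Π are bounded operators with A² = Id, Π² = Id and ΠA + AΠ nilpotent, and α ∈ ℂ \ {0}. Then the spectrum of L is contained in {−1 + α + √(1+α²), −1 + α − √(1+α²)}, and in particular L is invertible. -/
lemma spec_nilp {A : Type*} [Ring A] [Algebra ℂ A] {n : A} (h : IsNilpotent n) :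
    spectrum ℂ n ⊆ {0} := by
  intro μ hμ
  by_contra hne
  simp only [Set.mem_singleton_iff] at hne
  apply hμ
  rw [spectrum.mem_resolventSet_iff]
  have : algebraMap ℂ A μ - n = (Units.mk0 μ hne) • ((1 : A) - μ⁻¹ • n) := by
    rw [smul_sub, Algebra.algebraMap_eq_smul_one]
    simp [smul_smul, Units.smul_def, mul_inv_cancel₀ hne]
  rw [this]
  exact ((h.smul μ⁻¹).isUnit_one_sub).smul (Units.mk0 μ hne)

theorem stmt_11 (E : Type*) [NormedAddCommGroup E] [NormedSpace ℂ E] [CompleteSpace E]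
    (A Pi : E →L[ℂ] E) (hA : A * A = 1) (hPi : Pi * Pi = 1)
    (hnil : IsNilpotent (Pi * A + A * Pi)) (α : ℂ) (hα : α ≠ 0)
    (L : E →L[ℂ] E) (hL : L = (1 - α) • (A - 1) + α • (A - Pi))
    (s : ℂ) (hs : s ^ 2 = 1 + α ^ 2) :
    spectrum ℂ L ⊆ {-1 + α + s, -1 + α - s} ∧ IsUnit L := by
  set B : E →L[ℂ] E := A - α • Pi with hB
  have hLB : L = algebraMap ℂ (E →L[ℂ] E) (α - 1) + B := by
    rw [hL, hB, Algebra.algebraMap_eq_smul_one]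
    simp only [smul_sub, sub_smul, one_smul]
    abel
  have hBsq : B * B = algebraMap ℂ (E →L[ℂ] E) (1 + α ^ 2) + (-α) • (Pi * A + A * Pi) := by
    rw [hB, Algebra.algebraMap_eq_smul_one]
    simp only [mul_sub, sub_mul, smul_mul_assoc, mul_smul_comm, hA, hPi, smul_smul, smul_add]
    rw [sq]
    module
  -- spectrum of B*B ⊆ {1+α²}
  have hspecBB : spectrum ℂ (B * B) ⊆ {1 + α ^ 2} := by
    rw [hBsq, ← spectrum.singleton_add_eq]
    have : spectrum ℂ ((-α) • (Pi * A + A * Pi)) ⊆ {0} := spec_nilp (hnil.smul (-α))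
    intro x hx
    obtain ⟨a, ha, b, hb, rfl⟩ := Set.mem_add.mp hx
    have := this hb
    simp_all
  -- spectrum of B ⊆ {s, -s}
  have hspecB : spectrum ℂ B ⊆ {s, -s} := by
    intro ν hν
    have h2 : ν ^ 2 ∈ spectrum ℂ (B ^ 2) :=
      spectrum.pow_image_subset B 2 ⟨ν, hν, rfl⟩
    rw [sq] at h2
    have := hspecBB h2
    simp only [Set.mem_singleton_iff] at this
    have hfac : (ν - s) * (ν + s) = 0 := by ring_nf; rw [this, hs]; ring
    have : ν = s ∨ ν = -s := by
      rcases mul_eq_zero.mp hfac with h | h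
      · left; linear_combination h
      · right; linear_combination h
    simpa using this
  have hsub : spectrum ℂ L ⊆ {-1 + α + s, -1 + α - s} := by
    rw [hLB, ← spectrum.singleton_add_eq]
    intro x hx
    obtain ⟨a, ha, b, hb, rfl⟩ := Set.mem_add.mp hx
    simp only [Set.mem_singleton_iff] at ha
    have hb' : b = s ∨ b = -s := by simpa using hspecB hb
    simp only [Set.mem_insert_iff, Set.mem_singleton_iff]
    rcases hb' with rfl | rfl
    · left; rw [ha]; ring
    · right; rw [ha]; ring
  refine ⟨hsub, ?_⟩
  by_contra hu
  have h0 : (0 : ℂ) ∈ spectrum ℂ L := spectrum.zero_mem (R := ℂ) hu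
  rcases hsub h0 with h | h
  · have hsv : s = 1 - α := by linear_combination -h
    apply hα
    have : (1 - α) ^ 2 = 1 + α ^ 2 := by rw [← hsv, hs]
    linear_combination this / (-2)
  · have hsv : s = α - 1 := by
      simp only [Set.mem_singleton_iff] at h
      linear_combination h
    apply hα
    have : (α - 1) ^ 2 = 1 + α ^ 2 := by rw [← hsv, hs]
    linear_combination this / (-2)
end
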